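/- arXiv:1804.10923 — 7 statements merged into one kernel-verified Lean document; each statement's English description precedes it below -/
import Mathlib

section
/- Let X₁, X₂, S be d×d complex matrices, and let ρ be the 2d×2d positive semidefinite matrix ρ = X*X where X is the block matrix [[X₁, S X₁],[0, X₂]]. If S is a normal matrix, then ρ is separable as a state on ℂ²⊗ℂᵈ, i.e. ρ is a sum of matrices of the form (v v*) ⊗ M with v ∈ ℂ² and M a d×d positive semidefinite matrix. -/
/-!
A normal matrix `S` has a spectral decomposition: with `P_z = 1_{z}(S)` the spectral projections
(continuous functional calculus), `g(S) = ∑_z g(z) P_z` for every `g`. The blocks of `ρ` are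
`X₁ᴴ g(S) X₁` for `g(z) = 1, z, z̄, |z|²`, plus `X₂ᴴ X₂` in the lower right corner, hence
`ρ = e₁e₁ᴴ ⊗ X₂ᴴ X₂ + ∑_z (1, z̄)(1, z̄)ᴴ ⊗ X₁ᴴ P_z X₁`, and `X₁ᴴ P_z X₁ = (P_z X₁)ᴴ (P_z X₁) ≥ 0`.
-/

open Matrix Kronecker ComplexOrder

/-- The 2×2 block matrix with d×d blocks, indexed by `Fin 2 × Fin d`. -/
def blk2 {d : ℕ} (A B C D : Matrix (Fin d) (Fin d) ℂ) :
    Matrix (Fin 2 × Fin d) (Fin 2 × Fin d) ℂ :=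
  fun p q => (![![A, B], ![C, D]] p.1 q.1) p.2 q.2

/-- Separability on ℂ²⊗ℂᵈ as a sum of (v v*) ⊗ M with M positive semidefinite. -/
def SepRankOne {d : ℕ} (ρ : Matrix (Fin 2 × Fin d) (Fin 2 × Fin d) ℂ) : Prop :=
  ∃ (n : ℕ) (v : Fin n → (Fin 2 → ℂ)) (M : Fin n → Matrix (Fin d) (Fin d) ℂ),
    (∀ i, (M i).PosSemidef) ∧
    ρ = ∑ i, (Matrix.vecMulVec (v i) (star (v i))) ⊗ₖ M i

section SpectralProjection

variable {R A : Type*} {p : A → Prop} [CommSemiring R] [StarRing R] [MetricSpace R]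
  [IsTopologicalSemiring R] [ContinuousStar R] [TopologicalSpace A] [Ring A] [StarRing A]
  [Algebra R A] [ContinuousFunctionalCalculus R A p]

noncomputable def spectralProjection (a : A) (z : R) : A :=
  cfc (Set.indicator {z} 1) a

variable {a : A} [Fintype (spectrum R a)]

-- On a finite spectrum every function is continuous, so `cfc` is linear in `g` without side
-- conditions.
theorem cfc_eq_sum_smul_spectralProjection (g : R → R) :
    cfc g a = ∑ z : spectrum R a, g z • spectralProjection a (z : R) := by
  calc cfc g a = cfc (∑ z : spectrum R a, fun w => g z • Set.indicator {(z : R)} 1 w) a := by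
        refine cfc_congr fun w hw => ?_
        rw [Finset.sum_apply, Finset.sum_eq_single ⟨w, hw⟩]
        · simp
        · rintro z - hz
          simp [Ne.symm (Subtype.ext_iff.not.mp hz)]
        · simp
    _ = _ := by
        rw [cfc_sum_univ _ _ fun _ => (Set.toFinite _).continuousOn _]
        exact Finset.sum_congr rfl fun z _ => cfc_smul _ _ _ ((Set.toFinite _).continuousOn _)

theorem spectralProjection_eq_star_mul_self (z : R) :
    spectralProjection a z = star (spectralProjection a z) * spectralProjection a z := by
  rw [spectralProjection, ← cfc_star,
    ← cfc_mul _ _ _ ((Set.toFinite _).continuousOn _) ((Set.toFinite _).continuousOn _)]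
  congr 1
  ext w
  by_cases hw : w = z <;> simp [Set.indicator, hw]

theorem mul_cfc_mul_eq_sum_smul (g : R → R) (x y : A) :
    x * cfc g a * y = ∑ z : spectrum R a, g z • (x * spectralProjection a (z : R) * y) := by
  simp only [cfc_eq_sum_smul_spectralProjection g, Finset.mul_sum, Finset.sum_mul,
    mul_smul_comm, smul_mul_assoc]

end SpectralProjection

open scoped Matrix.Norms.L2Operator

theorem Matrix.posSemidef_conjTranspose_mul_spectralProjection_mul {n : Type*} [Fintype n]
    [DecidableEq n] (S X : Matrix n n ℂ) [Fintype (spectrum ℂ S)] (z : ℂ) :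
    (Xᴴ * spectralProjection S z * X).PosSemidef := by
  set P := spectralProjection S z
  have hP : P = Pᴴ * P := spectralProjection_eq_star_mul_self z
  have hPX : Xᴴ * P * X = (P * X)ᴴ * (P * X) := by
    conv_lhs => rw [hP]
    simp only [conjTranspose_mul, Matrix.mul_assoc]
  exact hPX ▸ posSemidef_conjTranspose_mul_self (P * X)

section Separable

variable {d : ℕ}

theorem sepRankOne_sum_kronecker {ι : Type*} [Fintype ι] (v : ι → Fin 2 → ℂ)
    (M : ι → Matrix (Fin d) (Fin d) ℂ) (hM : ∀ i, (M i).PosSemidef) :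
    SepRankOne (∑ i, vecMulVec (v i) (star (v i)) ⊗ₖ M i) :=
  let e := Fintype.equivFin ι
  ⟨Fintype.card ι, v ∘ e.symm, M ∘ e.symm, fun _ => hM _, (e.symm.sum_comp _).symm⟩

theorem sepRankOne_kronecker_add_sum {ι : Type*} [Fintype ι] (v₀ : Fin 2 → ℂ)
    (M₀ : Matrix (Fin d) (Fin d) ℂ) (hM₀ : M₀.PosSemidef) (v : ι → Fin 2 → ℂ)
    (M : ι → Matrix (Fin d) (Fin d) ℂ) (hM : ∀ i, (M i).PosSemidef) :
    SepRankOne (vecMulVec v₀ (star v₀) ⊗ₖ M₀ + ∑ i, vecMulVec (v i) (star (v i)) ⊗ₖ M i) := by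
  simpa [Fintype.sum_option] using sepRankOne_sum_kronecker (ι := Option ι)
    (fun i => i.elim v₀ v) (fun i => i.elim M₀ M) fun i => i.rec hM₀ hM

theorem blk2_conjTranspose (A B C D : Matrix (Fin d) (Fin d) ℂ) :
    (blk2 A B C D)ᴴ = blk2 Aᴴ Cᴴ Bᴴ Dᴴ := by
  ext ⟨i, k⟩ ⟨j, l⟩
  fin_cases i <;> fin_cases j <;> simp [blk2, Matrix.conjTranspose_apply]

theorem blk2_mul_blk2 (A B C D A' B' C' D' : Matrix (Fin d) (Fin d) ℂ) :
    blk2 A B C D * blk2 A' B' C' D'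
      = blk2 (A * A' + B * C') (A * B' + B * D') (C * A' + D * C') (C * B' + D * D') := by
  ext ⟨i, k⟩ ⟨j, l⟩
  rw [Matrix.mul_apply, Fintype.sum_prod_type, Fin.sum_univ_two]
  fin_cases i <;> fin_cases j <;> simp [blk2, Matrix.mul_apply]

theorem blk2_add_blk2 (A B C D A' B' C' D' : Matrix (Fin d) (Fin d) ℂ) :
    blk2 A B C D + blk2 A' B' C' D' = blk2 (A + A') (B + B') (C + C') (D + D') := by
  ext ⟨i, k⟩ ⟨j, l⟩
  fin_cases i <;> fin_cases j <;> simp [blk2]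

theorem sum_blk2 {ι : Type*} (s : Finset ι) (A B C D : ι → Matrix (Fin d) (Fin d) ℂ) :
    ∑ i ∈ s, blk2 (A i) (B i) (C i) (D i)
      = blk2 (∑ i ∈ s, A i) (∑ i ∈ s, B i) (∑ i ∈ s, C i) (∑ i ∈ s, D i) := by
  ext ⟨i, k⟩ ⟨j, l⟩
  fin_cases i <;> fin_cases j <;> simp [blk2, Matrix.sum_apply]

theorem vecMulVec_kronecker_eq_blk2 (v : Fin 2 → ℂ) (M : Matrix (Fin d) (Fin d) ℂ) :
    vecMulVec v (star v) ⊗ₖ M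
      = blk2 ((v 0 * star (v 0)) • M) ((v 0 * star (v 1)) • M)
             ((v 1 * star (v 0)) • M) ((v 1 * star (v 1)) • M) := by
  ext ⟨i, k⟩ ⟨j, l⟩
  fin_cases i <;> fin_cases j <;> simp [blk2, vecMulVec_apply]

theorem blk2_conjTranspose_mul_self_eq_sum_kronecker (X₁ X₂ S : Matrix (Fin d) (Fin d) ℂ)
    [IsStarNormal S] [Fintype (spectrum ℂ S)] :
    (blk2 X₁ (S * X₁) 0 X₂)ᴴ * blk2 X₁ (S * X₁) 0 X₂
      = vecMulVec ![0, 1] (star ![0, 1]) ⊗ₖ (X₂ᴴ * X₂)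
        + ∑ z : spectrum ℂ S, vecMulVec ![1, star (z : ℂ)] (star ![1, star (z : ℂ)])
            ⊗ₖ (X₁ᴴ * spectralProjection S (z : ℂ) * X₁) := by
  have hX (g : ℂ → ℂ) := mul_cfc_mul_eq_sum_smul (a := S) g X₁ᴴ X₁
  have h₁ : X₁ᴴ * X₁ = ∑ z : spectrum ℂ S, X₁ᴴ * spectralProjection S (z : ℂ) * X₁ := by
    simpa [cfc_one ℂ S] using hX 1
  have h_id : X₁ᴴ * (S * X₁)
      = ∑ z : spectrum ℂ S, (z : ℂ) • (X₁ᴴ * spectralProjection S (z : ℂ) * X₁) := by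
    simpa [cfc_id ℂ S, Matrix.mul_assoc] using hX id
  have h_star : (S * X₁)ᴴ * X₁
      = ∑ z : spectrum ℂ S, star (z : ℂ) • (X₁ᴴ * spectralProjection S (z : ℂ) * X₁) := by
    have := hX (star ·)
    rw [cfc_star_id S, star_eq_conjTranspose] at this
    simpa [Matrix.mul_assoc] using this
  have h_normSq : (S * X₁)ᴴ * (S * X₁)
      = ∑ z : spectrum ℂ S, (star (z : ℂ) * z) • (X₁ᴴ * spectralProjection S (z : ℂ) * X₁) := by
    have := hX (fun w => star w * w)
    rw [cfc_mul _ _ _ ((Set.toFinite _).continuousOn _) ((Set.toFinite _).continuousOn _),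
      cfc_star_id S, cfc_id' ℂ S, star_eq_conjTranspose] at this
    simpa [Matrix.mul_assoc] using this
  simp only [vecMulVec_kronecker_eq_blk2, sum_blk2, blk2_add_blk2, blk2_conjTranspose,
    blk2_mul_blk2, cons_val_zero, cons_val_one, star_zero, star_one, star_star, mul_zero,
    zero_mul, mul_one, one_mul, zero_smul, one_smul, zero_add, conjTranspose_zero, add_zero]
  rw [h₁, h_id, h_star, h_normSq, add_comm]

end Separable

theorem stmt0 {d : ℕ} (X₁ X₂ S : Matrix (Fin d) (Fin d) ℂ)
    (hS : S * Sᴴ = Sᴴ * S) :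
    SepRankOne ((blk2 X₁ (S * X₁) 0 X₂)ᴴ * (blk2 X₁ (S * X₁) 0 X₂)) := by
  have : IsStarNormal S := ⟨hS.symm⟩
  have := Fintype.ofFinite (spectrum ℂ S)
  rw [blk2_conjTranspose_mul_self_eq_sum_kronecker]
  exact sepRankOne_kronecker_add_sum _ _ (posSemidef_conjTranspose_mul_self X₂) _ _
    fun z => posSemidef_conjTranspose_mul_spectralProjection_mul S X₁ z
end

section
/- Let ρ be a 2d×2d positive semidefinite matrix of the form ρ = X*X with X = [[X₁, S X₁],[0, X₂]] satisfying the SPPT condition X₁*(S S* - S* S)X₁ = 0. Then the partial transpose of ρ with respect to the first tensor factor, namely ρ^{T₁} = [[A, B̄],[B̄*, D]] where ρ = [[A, B],[B*, D]] (i.e., transposing the 2×2 block index), equals Y*Y with Y = [[X₁, S* X₁],[0, X₂]]; in particular ρ^{T₁} is positive semidefinite. -/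
open Matrix Kronecker ComplexOrder

/-- Separability on ℂ²⊗ℂᵈ: a finite sum of tensor products of positive
semidefinite 2×2 and d×d matrices. -/
def Sep2 {d : ℕ} (ρ : Matrix (Fin 2 × Fin d) (Fin 2 × Fin d) ℂ) : Prop :=
  ∃ (n : ℕ) (A : Fin n → Matrix (Fin 2) (Fin 2) ℂ)
    (B : Fin n → Matrix (Fin d) (Fin d) ℂ),
    (∀ i, (A i).PosSemidef) ∧ (∀ i, (B i).PosSemidef) ∧
    ρ = ∑ i, A i ⊗ₖ B i

/-- Partial transpose with respect to the first tensor factor. -/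
def ptrans1 {d : ℕ} (ρ : Matrix (Fin 2 × Fin d) (Fin 2 × Fin d) ℂ) :
    Matrix (Fin 2 × Fin d) (Fin 2 × Fin d) ℂ :=
  fun p q => ρ (q.1, p.2) (p.1, q.2)

lemma blk2_mul {d : ℕ} (A B C D A' B' C' D' : Matrix (Fin d) (Fin d) ℂ) :
    blk2 A B C D * blk2 A' B' C' D' =
      blk2 (A*A'+B*C') (A*B'+B*D') (C*A'+D*C') (C*B'+D*D') := by
  ext ⟨i,x⟩ ⟨j,y⟩
  fin_cases i <;> fin_cases j <;>
    simp [blk2, Matrix.mul_apply, Fintype.sum_prod_type, Fin.sum_univ_two, Finset.sum_add_distrib]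

lemma blk2_conjT {d : ℕ} (A B C D : Matrix (Fin d) (Fin d) ℂ) :
    (blk2 A B C D)ᴴ = blk2 Aᴴ Cᴴ Bᴴ Dᴴ := by
  ext ⟨i,x⟩ ⟨j,y⟩
  fin_cases i <;> fin_cases j <;> simp [blk2, Matrix.conjTranspose_apply]

lemma ptrans1_blk2 {d : ℕ} (A B C D : Matrix (Fin d) (Fin d) ℂ) :
    ptrans1 (blk2 A B C D) = blk2 A C B D := by
  ext ⟨i,x⟩ ⟨j,y⟩
  fin_cases i <;> fin_cases j <;> simp [blk2, ptrans1]

theorem stmt5 {d : ℕ} (X₁ X₂ S : Matrix (Fin d) (Fin d) ℂ)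
    (hSPPT : X₁ᴴ * (S * Sᴴ - Sᴴ * S) * X₁ = 0) :
    ptrans1 ((blk2 X₁ (S * X₁) 0 X₂)ᴴ * (blk2 X₁ (S * X₁) 0 X₂)) =
      (blk2 X₁ (Sᴴ * X₁) 0 X₂)ᴴ * (blk2 X₁ (Sᴴ * X₁) 0 X₂) ∧
    (ptrans1 ((blk2 X₁ (S * X₁) 0 X₂)ᴴ * (blk2 X₁ (S * X₁) 0 X₂))).PosSemidef := by
  have key : X₁ᴴ * (S * Sᴴ) * X₁ = X₁ᴴ * (Sᴴ * S) * X₁ := by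
    have h : X₁ᴴ * (S * Sᴴ) * X₁ - X₁ᴴ * (Sᴴ * S) * X₁ = 0 := by
      rw [← hSPPT]; noncomm_ring
    exact sub_eq_zero.mp h
  have heq : ptrans1 ((blk2 X₁ (S * X₁) 0 X₂)ᴴ * (blk2 X₁ (S * X₁) 0 X₂)) =
      (blk2 X₁ (Sᴴ * X₁) 0 X₂)ᴴ * (blk2 X₁ (Sᴴ * X₁) 0 X₂) := by
    rw [blk2_conjT, blk2_conjT, blk2_mul, blk2_mul, ptrans1_blk2]
    have h4 : (S * X₁)ᴴ * (S * X₁) + X₂ᴴ * X₂ = X₂ᴴ * X₂ + (Sᴴ * X₁)ᴴ * (Sᴴ * X₁) := by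
      have e1 : (S * X₁)ᴴ * (S * X₁) = X₁ᴴ * (Sᴴ * S) * X₁ := by
        rw [Matrix.conjTranspose_mul]; noncomm_ring
      have e2 : (Sᴴ * X₁)ᴴ * (Sᴴ * X₁) = X₁ᴴ * (S * Sᴴ) * X₁ := by
        rw [Matrix.conjTranspose_mul, Matrix.conjTranspose_conjTranspose]; noncomm_ring
      rw [e1, e2, ← key, add_comm]
    rw [h4]
    simp only [Matrix.conjTranspose_mul, Matrix.conjTranspose_conjTranspose,
      Matrix.conjTranspose_zero, Matrix.zero_mul, Matrix.mul_zero, add_zero, zero_add,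
      Matrix.mul_assoc, add_comm]
  refine ⟨heq, ?_⟩
  rw [heq]
  exact Matrix.posSemidef_conjTranspose_mul_self _
end

section
/- Let T₁, T₂, S₁, S₂ be N×N normal complex matrices with S₁ T₁ = T₁ S₁, S₁ T₁* = T₁* S₁ (i.e., [S₁, T₁*] = 0 and each of S₁, T₁, S₂, T₂ is normal), and let Y₁₁, Y₁₂, Y₂₁, Y₂₂ be N×N matrices. Define the 4N×4N matrix X as the block matrix with rows (Y₁₁, T₁Y₁₁, S₁Y₁₁, S₁T₁Y₁₁), (0, Y₁₂, 0, S₂Y₁₂), (0, 0, Y₂₁, T₂Y₂₁), (0, 0, 0, Y₂₂). Then ρ = X*X is fully separable as a state on ℂ²⊗ℂ²⊗ℂᴺ. -/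
/-!
The `(i, j)` block row of `X` has the form `(P k * Q l * Y)_{k,l}`, where the `P k` and `Q l`
range over `{0, 1, S, T}` and form a commuting family of normal matrices. Such a family is
simultaneously unitarily diagonalisable, `P k = U diag(φ k) U*` and `Q l = U diag(ψ l) U*`, so the
Gram matrix of the block row is `∑ᵢ φ̄ᵢφᵢᵀ ⊗ ψ̄ᵢψᵢᵀ ⊗ wᵢ*wᵢ` with `φᵢ = (φ k i)ₖ`, `ψᵢ = (ψ l i)ₗ`
and `wᵢ` the `i`-th row of `U* Y`: a sum of products of rank-one positive semidefinite matrices.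
`X* X` is the sum of the Gram matrices of its block rows.
-/

open Matrix Kronecker ComplexOrder

/-- Full separability on ℂᵃ⊗ℂᵇ⊗ℂᶜ: a finite sum of tensor products of
positive semidefinite matrices on the three factors. -/
def Sep3 {a b c : ℕ} (ρ : Matrix (Fin a × Fin b × Fin c) (Fin a × Fin b × Fin c) ℂ) : Prop :=
  ∃ (n : ℕ) (A : Fin n → Matrix (Fin a) (Fin a) ℂ)
    (B : Fin n → Matrix (Fin b) (Fin b) ℂ)
    (C : Fin n → Matrix (Fin c) (Fin c) ℂ),
    (∀ i, (A i).PosSemidef) ∧ (∀ i, (B i).PosSemidef) ∧ (∀ i, (C i).PosSemidef) ∧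
    ρ = ∑ i, A i ⊗ₖ (B i ⊗ₖ C i)

theorem Matrix.conjTranspose_mul_self_eq_sum_rows {κ n m α : Type*} [Fintype κ] [Fintype n]
    [NonUnitalNonAssocSemiring α] [StarRing α] (X : Matrix (κ × n) m α) :
    Xᴴ * X = ∑ i, (X.submatrix (Prod.mk i) id)ᴴ * X.submatrix (Prod.mk i) id := by
  ext p q
  simp [mul_apply, Fintype.sum_prod_type, Matrix.sum_apply]

theorem Matrix.exists_orthonormalBasis_mulVec_eq_smul_of_commute {𝕜 ι n : Type*} [RCLike 𝕜]
    [Fintype n] [DecidableEq n] (H : ι → Matrix n n 𝕜) (hH : ∀ i, (H i).IsHermitian)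
    (hC : ∀ i j, Commute (H i) (H j)) :
    ∃ (b : OrthonormalBasis n 𝕜 (EuclideanSpace 𝕜 n)) (μ : ι → n → 𝕜),
      ∀ i a, H i *ᵥ b a = μ i a • b a := by
  classical
  let T i := toEuclideanLin (H i)
  have hT i : (T i).IsSymmetric := isSymmetric_toEuclideanLin_iff.mpr (hH i)
  have hTC : Pairwise (Function.onFun Commute T) := fun i j _ => by
    simp only [Function.onFun, T, Commute, SemiconjBy, Module.End.mul_eq_comp]
    rw [← toLpLin_mul_same, ← toLpLin_mul_same, (hC i j).eq]
  let V (χ : ι → 𝕜) := ⨅ i, Module.End.eigenspace (T i) (χ i)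
  let κ := {χ : ι → 𝕜 // V χ ≠ ⊥}
  have hV : DirectSum.IsInternal V :=
    LinearMap.IsSymmetric.directSum_isInternal_of_pairwise_commute hT hTC
  have : Fintype κ := hV.submodule_iSupIndep.fintypeNeBotOfFiniteDimensional
  replace hV : DirectSum.IsInternal fun χ : κ => V χ := DirectSum.isInternal_ne_bot_iff.mpr hV
  have hOrth : OrthogonalFamily 𝕜 (fun χ : κ => V χ) fun χ => (V χ).subtypeₗᵢ :=
    (LinearMap.IsSymmetric.orthogonalFamily_iInf_eigenspaces hT).comp Subtype.val_injective
  let b := hV.collectedOrthonormalBasis hOrth fun χ => stdOrthonormalBasis 𝕜 (V χ)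
  let e := b.toBasis.indexEquiv (EuclideanSpace.basisFun n 𝕜).toBasis
  refine ⟨b.reindex e, fun i a => (e.symm a).1.1 i, fun i a => ?_⟩
  have hmem :=
    hV.collectedOrthonormalBasis_mem hOrth (fun χ => stdOrthonormalBasis 𝕜 (V χ)) (e.symm a)
  have := Module.End.mem_eigenspace_iff.mp ((Submodule.mem_iInf _).mp hmem i)
  simpa [T] using congrArg WithLp.ofLp this

theorem Matrix.exists_unitary_diagonal_of_commute_isHermitian {𝕜 ι n : Type*} [RCLike 𝕜]
    [Fintype n] [DecidableEq n] (H : ι → Matrix n n 𝕜) (hH : ∀ i, (H i).IsHermitian)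
    (hC : ∀ i j, Commute (H i) (H j)) :
    ∃ U ∈ unitaryGroup n 𝕜, ∃ d : ι → n → 𝕜, ∀ i, H i = U * diagonal (d i) * star U := by
  obtain ⟨b, μ, hb⟩ := exists_orthonormalBasis_mulVec_eq_smul_of_commute H hH hC
  let U := (EuclideanSpace.basisFun n 𝕜).toBasis.toMatrix b.toBasis
  have hU : U ∈ unitaryGroup n 𝕜 :=
    (EuclideanSpace.basisFun n 𝕜).toMatrix_orthonormalBasis_mem_unitary b
  refine ⟨U, hU, μ, fun i => ?_⟩
  have hHU : H i * U = U * diagonal (μ i) := by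
    ext r a
    simpa [U, Module.Basis.toMatrix_apply, diagonal_apply, mul_apply, mulVec, dotProduct,
      mul_comm] using congrFun (hb i a) r
  rw [← hHU, Matrix.mul_assoc, (mem_unitaryGroup_iff.mp hU), Matrix.mul_one]

open scoped ComplexStarModule Matrix.Norms.L2Operator in
theorem Matrix.exists_unitary_diagonal_of_commute_isStarNormal {ι n : Type*}
    [Fintype n] [DecidableEq n] (M : ι → Matrix n n ℂ) (hM : ∀ i, IsStarNormal (M i))
    (hC : ∀ i j, Commute (M i) (M j)) :
    ∃ U ∈ unitaryGroup n ℂ, ∃ d : ι → n → ℂ, ∀ i, M i = U * diagonal (d i) * star U := by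
  let A := StarAlgebra.adjoin ℂ (Set.range M)
  -- The star-commutation needed here is Fuglede's theorem.
  have : IsMulCommutative A := StarAlgebra.isMulCommutative_adjoin ℂ
    (by rintro _ ⟨i, rfl⟩ _ ⟨j, rfl⟩; exact hC i j)
    (by rintro _ ⟨i, rfl⟩ _ ⟨j, rfl⟩; exact (hM j).commute_star_right (hC i j))
  have hmem i : M i ∈ A := StarAlgebra.subset_adjoin ℂ _ ⟨i, rfl⟩
  have hre_mem i : (ℜ (M i) : Matrix n n ℂ) ∈ A := by
    rw [realPart_apply_coe, ← Complex.coe_smul]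
    exact A.smul_mem (add_mem (hmem i) (star_mem (hmem i))) _
  have him_mem i : (ℑ (M i) : Matrix n n ℂ) ∈ A := by
    rw [imaginaryPart_apply_coe, ← Complex.coe_smul]
    exact A.smul_mem (A.smul_mem (sub_mem (hmem i) (star_mem (hmem i))) _) _
  let H : ι ⊕ ι → Matrix n n ℂ := Sum.elim (fun i => ℜ (M i)) (fun i => ℑ (M i))
  have hHA : ∀ k, H k ∈ A := by rintro (i | i) <;> simp [H, hre_mem, him_mem]
  obtain ⟨U, hU, μ, hμ⟩ := exists_unitary_diagonal_of_commute_isHermitian H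
    (by rintro (i | i) <;> simp [H, Matrix.isHermitian_iff_isSelfAdjoint])
    (fun k l => congrArg Subtype.val (mul_comm' (⟨H k, hHA k⟩ : A) ⟨H l, hHA l⟩))
  refine ⟨U, hU, fun i => μ (.inl i) + Complex.I • μ (.inr i), fun i => ?_⟩
  have hre := hμ (.inl i)
  have him := hμ (.inr i)
  simp only [H, Sum.elim_inl, Sum.elim_inr] at hre him
  have hdiag : diagonal (μ (.inl i) + Complex.I • μ (.inr i))
      = diagonal (μ (.inl i)) + Complex.I • diagonal (μ (.inr i)) := by
    rw [← diagonal_smul, diagonal_add]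
    rfl
  rw [← realPart_add_I_smul_imaginaryPart (M i), hre, him, hdiag, Matrix.mul_add, Matrix.add_mul,
    Matrix.mul_smul, Matrix.smul_mul]

namespace Sep3

variable {a b c : ℕ}

theorem sum_kronecker {ι : Type*} [Fintype ι] (A : ι → Matrix (Fin a) (Fin a) ℂ)
    (B : ι → Matrix (Fin b) (Fin b) ℂ) (C : ι → Matrix (Fin c) (Fin c) ℂ)
    (hA : ∀ i, (A i).PosSemidef) (hB : ∀ i, (B i).PosSemidef) (hC : ∀ i, (C i).PosSemidef) :
    Sep3 (∑ i, A i ⊗ₖ (B i ⊗ₖ C i)) := by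
  let e := (Fintype.equivFin ι).symm
  exact ⟨Fintype.card ι, A ∘ e, B ∘ e, C ∘ e, fun _ => hA _, fun _ => hB _, fun _ => hC _,
    (e.sum_comp fun i => A i ⊗ₖ (B i ⊗ₖ C i)).symm⟩

theorem sum {κ : Type*} [Fintype κ]
    {ρ : κ → Matrix (Fin a × Fin b × Fin c) (Fin a × Fin b × Fin c) ℂ}
    (h : ∀ j, Sep3 (ρ j)) : Sep3 (∑ j, ρ j) := by
  choose n A B C hA hB hC hρ using h
  have hsum : ∑ j, ρ j = ∑ p : (Σ j, Fin (n j)), A p.1 p.2 ⊗ₖ (B p.1 p.2 ⊗ₖ C p.1 p.2) := by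
    rw [Fintype.sum_sigma]
    exact Finset.sum_congr rfl fun j _ => hρ j
  rw [hsum]
  exact sum_kronecker (ι := Σ j, Fin (n j)) (fun p => A p.1 p.2) (fun p => B p.1 p.2)
    (fun p => C p.1 p.2) (fun p => hA p.1 p.2) (fun p => hB p.1 p.2) (fun p => hC p.1 p.2)

theorem conjTranspose_mul_self_of_rows {κ n : Type*} [Fintype κ] [Fintype n]
    (X : Matrix (κ × n) (Fin a × Fin b × Fin c) ℂ)
    (h : ∀ i, Sep3 ((X.submatrix (Prod.mk i) id)ᴴ * X.submatrix (Prod.mk i) id)) :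
    Sep3 (Xᴴ * X) := by
  rw [conjTranspose_mul_self_eq_sum_rows]
  exact Sep3.sum h

end Sep3

def productRow {a b c : ℕ} (P : Fin a → Matrix (Fin c) (Fin c) ℂ)
    (Q : Fin b → Matrix (Fin c) (Fin c) ℂ) (Y : Matrix (Fin c) (Fin c) ℂ) :
    Matrix (Fin c) (Fin a × Fin b × Fin c) ℂ :=
  of fun n q => (P q.1 * Q q.2.1 * Y) n q.2.2

theorem sep3_conjTranspose_mul_self_productRow_of_diagonal {a b c : ℕ}
    {P : Fin a → Matrix (Fin c) (Fin c) ℂ} {Q : Fin b → Matrix (Fin c) (Fin c) ℂ}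
    (Y : Matrix (Fin c) (Fin c) ℂ) {U : Matrix (Fin c) (Fin c) ℂ} (hU : U ∈ unitaryGroup _ ℂ)
    {φ : Fin a → Fin c → ℂ} {ψ : Fin b → Fin c → ℂ}
    (hP : ∀ k, P k = U * diagonal (φ k) * star U) (hQ : ∀ l, Q l = U * diagonal (ψ l) * star U) :
    Sep3 ((productRow P Q Y)ᴴ * productRow P Q Y) := by
  set W := star U * Y
  have hPQY k l : P k * Q l * Y = U * (diagonal (φ k * ψ l) * W) := by
    rw [hP, hQ, show diagonal (φ k * ψ l) = diagonal (φ k) * diagonal (ψ l) from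
      (diagonal_mul_diagonal' _ _).symm]
    simp only [W, Matrix.mul_assoc, ← Matrix.mul_assoc (star U) U,
      (mem_unitaryGroup_iff'.mp hU), Matrix.one_mul]
  convert Sep3.sum_kronecker (fun i => vecMulVec (star fun k => φ k i) fun k => φ k i)
    (fun i => vecMulVec (star fun l => ψ l i) fun l => ψ l i)
    (fun i => vecMulVec (star (W i)) (W i))
    (fun _ => posSemidef_vecMulVec_star_self _) (fun _ => posSemidef_vecMulVec_star_self _)
    (fun _ => posSemidef_vecMulVec_star_self _) using 1
  ext ⟨k, l, m⟩ ⟨k', l', m'⟩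
  have hentry : ((productRow P Q Y)ᴴ * productRow P Q Y) (k, l, m) (k', l', m')
      = ((P k * Q l * Y)ᴴ * (P k' * Q l' * Y)) m m' := rfl
  have hUU : Uᴴ * U = 1 := mem_unitaryGroup_iff'.mp hU
  rw [hentry, hPQY, hPQY, conjTranspose_mul, Matrix.mul_assoc, ← Matrix.mul_assoc Uᴴ, hUU,
    Matrix.one_mul, mul_apply]
  simp only [conjTranspose_apply, diagonal_mul, Matrix.sum_apply, kroneckerMap_apply,
    vecMulVec_apply, Pi.star_apply, Pi.mul_apply, star_mul']
  exact Finset.sum_congr rfl fun i _ => by ring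

theorem sep3_conjTranspose_mul_self_productRow {a b c : ℕ}
    (P : Fin a → Matrix (Fin c) (Fin c) ℂ) (Q : Fin b → Matrix (Fin c) (Fin c) ℂ)
    (Y : Matrix (Fin c) (Fin c) ℂ) (hnormal : ∀ i, IsStarNormal (Sum.elim P Q i))
    (hcomm : ∀ i j, Commute (Sum.elim P Q i) (Sum.elim P Q j)) :
    Sep3 ((productRow P Q Y)ᴴ * productRow P Q Y) := by
  obtain ⟨U, hU, d, hd⟩ := exists_unitary_diagonal_of_commute_isStarNormal _ hnormal hcomm
  exact sep3_conjTranspose_mul_self_productRow_of_diagonal Y hU (fun k => hd (.inl k))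
    (fun l => hd (.inr l))

theorem stmt6_general {N : ℕ} (T₁ T₂ S₁ S₂ Y₁₁ Y₁₂ Y₂₁ Y₂₂ : Matrix (Fin N) (Fin N) ℂ)
    (hT₁ : T₁ * T₁ᴴ = T₁ᴴ * T₁) (hT₂ : T₂ * T₂ᴴ = T₂ᴴ * T₂)
    (hS₁ : S₁ * S₁ᴴ = S₁ᴴ * S₁) (hS₂ : S₂ * S₂ᴴ = S₂ᴴ * S₂)
    (hc : S₁ * T₁ = T₁ * S₁) :
    letI R : Fin 2 → Fin 2 → Fin 2 → Fin 2 → Matrix (Fin N) (Fin N) ℂ :=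
      ![![![![Y₁₁, T₁ * Y₁₁], ![S₁ * Y₁₁, S₁ * T₁ * Y₁₁]],
         ![![0, Y₁₂], ![0, S₂ * Y₁₂]]],
        ![![![0, 0], ![Y₂₁, T₂ * Y₂₁]],
         ![![0, 0], ![0, Y₂₂]]]]
    letI X : Matrix (Fin 2 × Fin 2 × Fin N) (Fin 2 × Fin 2 × Fin N) ℂ :=
      fun p q => (R p.1 p.2.1 q.1 q.2.1) p.2.2 q.2.2
    Sep3 (Xᴴ * X) := by
  let P : Fin 2 → Fin 2 → Fin 2 → Matrix (Fin N) (Fin N) ℂ :=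
    ![![![1, S₁], ![1, S₂]], ![![0, 1], ![0, 1]]]
  let Q : Fin 2 → Fin 2 → Fin 2 → Matrix (Fin N) (Fin N) ℂ :=
    ![![![1, T₁], ![0, 1]], ![![1, T₂], ![0, 1]]]
  let Y : Fin 2 → Fin 2 → Matrix (Fin N) (Fin N) ℂ := ![![Y₁₁, Y₁₂], ![Y₂₁, Y₂₂]]
  refine Sep3.conjTranspose_mul_self_of_rows _ fun i =>
    Sep3.conjTranspose_mul_self_of_rows _ fun j => ?_
  have : IsStarNormal S₁ := ⟨hS₁.symm⟩
  have : IsStarNormal S₂ := ⟨hS₂.symm⟩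
  have : IsStarNormal T₁ := ⟨hT₁.symm⟩
  have : IsStarNormal T₂ := ⟨hT₂.symm⟩
  have hST : Commute S₁ T₁ := hc
  have hnormal r : IsStarNormal (Sum.elim (P i j) (Q i j) r) := by
    fin_cases i <;> fin_cases j <;> rcases r with k | k <;> fin_cases k <;>
      simp [P, Q] <;> infer_instance
  have hcomm r s : Commute (Sum.elim (P i j) (Q i j) r) (Sum.elim (P i j) (Q i j) s) := by
    fin_cases i <;> fin_cases j <;> rcases r with k | k <;> rcases s with l | l <;>
      fin_cases k <;> fin_cases l <;> simp [P, Q, hST, hST.symm]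
  convert sep3_conjTranspose_mul_self_productRow (P i j) (Q i j) (Y i j) hnormal hcomm
    using 3 <;>
  · ext n ⟨k, l, m⟩
    fin_cases i <;> fin_cases j <;> fin_cases k <;> fin_cases l <;>
      simp [productRow, P, Q, Y, submatrix]

theorem stmt6 {N : ℕ} (T₁ T₂ S₁ S₂ Y₁₁ Y₁₂ Y₂₁ Y₂₂ : Matrix (Fin N) (Fin N) ℂ)
    (hT₁ : T₁ * T₁ᴴ = T₁ᴴ * T₁) (hT₂ : T₂ * T₂ᴴ = T₂ᴴ * T₂)
    (hS₁ : S₁ * S₁ᴴ = S₁ᴴ * S₁) (hS₂ : S₂ * S₂ᴴ = S₂ᴴ * S₂)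
    (hc : S₁ * T₁ = T₁ * S₁) (hc' : S₁ * T₁ᴴ = T₁ᴴ * S₁) :
    letI R : Fin 2 → Fin 2 → Fin 2 → Fin 2 → Matrix (Fin N) (Fin N) ℂ :=
      ![![![![Y₁₁, T₁ * Y₁₁], ![S₁ * Y₁₁, S₁ * T₁ * Y₁₁]],
         ![![0, Y₁₂], ![0, S₂ * Y₁₂]]],
        ![![![0, 0], ![Y₂₁, T₂ * Y₂₁]],
         ![![0, 0], ![0, Y₂₂]]]]
    letI X : Matrix (Fin 2 × Fin 2 × Fin N) (Fin 2 × Fin 2 × Fin N) ℂ :=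
      fun p q => (R p.1 p.2.1 q.1 q.2.1) p.2.2 q.2.2
    Sep3 (Xᴴ * X) :=
  stmt6_general T₁ T₂ S₁ S₂ Y₁₁ Y₁₂ Y₂₁ Y₂₂ hT₁ hT₂ hS₁ hS₂ hc
end

section
/- Let B, C, D be N×N complex matrices with B and C normal, BC = CB, BC* = C*B, and D positive semidefinite. Then the N·4 × N·4 matrix ρ = √D (𝟙, B, C, CB)* (𝟙, B, C, CB) √D — i.e. the Gram-type matrix with (i,j) block √D Mᵢ* Mⱼ √D where (M₁,M₂,M₃,M₄) = (𝟙, B, C, CB) — is fully separable as a state on ℂ²⊗ℂ²⊗ℂᴺ. -/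
/-!
The hypotheses say that `B`, `Bᴴ`, `C`, `Cᴴ` pairwise commute, so the Hermitian real and imaginary
parts of `B` and `C` form a commuting family and are diagonalised by a single unitary `U`:
`B = U diag(β) Uᴴ`, `C = U diag(γ) Uᴴ`. Hence `C ^ i * B ^ j = U diag(γ ^ i β ^ j) Uᴴ`, and with
`W = √D U` the `((i, j), (i', j'))` block of `ρ` is `W diag(conj (γ ^ i β ^ j) γ ^ i' β ^ j') Wᴴ`.
Expanding along the columns `w_k` of `W` writes `ρ` as `∑ k, |a_k⟩⟨a_k| ⊗ |b_k⟩⟨b_k| ⊗ |w_k⟩⟨w_k|`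
with `a_k = (1, conj γ_k)` and `b_k = (1, conj β_k)`.
-/

open Matrix Kronecker ComplexOrder

/-- The square root of a positive semidefinite matrix, as defined in the older Mathlib
(`Matrix.PosSemidef.sqrt`, since removed). -/
noncomputable def Matrix.PosSemidef.sqrt {n 𝕜 : Type*} [Fintype n] [DecidableEq n] [RCLike 𝕜]
    {A : Matrix n n 𝕜} (hA : A.PosSemidef) : Matrix n n 𝕜 :=
  (hA.1.eigenvectorUnitary : Matrix n n 𝕜) *
    diagonal ((↑) ∘ Real.sqrt ∘ hA.1.eigenvalues) * (star hA.1.eigenvectorUnitary : Matrix n n 𝕜)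

open ComplexStarModule

theorem LinearMap.IsSymmetric.exists_orthonormalBasis_apply_eq_smul_of_commute
    {𝕜 E ι : Type*} [RCLike 𝕜] [NormedAddCommGroup E] [InnerProductSpace 𝕜 E]
    [FiniteDimensional 𝕜 E] {T : ι → E →ₗ[𝕜] E}
    (hT : ∀ i, (T i).IsSymmetric) (hC : Pairwise (Function.onFun Commute T)) :
    ∃ (b : OrthonormalBasis (Fin (Module.finrank 𝕜 E)) 𝕜 E) (χ : Fin (Module.finrank 𝕜 E) → ι → 𝕜),
      ∀ k i, T i (b k) = χ k i • b k := by
  classical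
  let V (χ : ι → 𝕜) := ⨅ i, Module.End.eigenspace (T i) (χ i)
  have hV : DirectSum.IsInternal V := directSum_isInternal_of_pairwise_commute hT hC
  let := hV.submodule_iSupIndep.fintypeNeBotOfFiniteDimensional
  have hV' : DirectSum.IsInternal fun χ : {χ // V χ ≠ ⊥} => V χ :=
    DirectSum.isInternal_ne_bot_iff.mpr hV
  have hO := (orthogonalFamily_iInf_eigenspaces hT).comp
    (Subtype.val_injective (p := fun χ => V χ ≠ ⊥))
  refine ⟨hV'.subordinateOrthonormalBasis rfl hO,
    fun k => (hV'.subordinateOrthonormalBasisIndex rfl k hO).1, fun k i => ?_⟩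
  exact Module.End.mem_eigenspace_iff.mp
    ((Submodule.mem_iInf _).mp (hV'.subordinateOrthonormalBasis_subordinate rfl k hO) i)

theorem Matrix.exists_unitary_eq_conj_diagonal_of_isHermitian_of_commute
    {𝕜 n ι : Type*} [RCLike 𝕜] [Fintype n] [DecidableEq n] {X : ι → Matrix n n 𝕜}
    (hX : ∀ i, (X i).IsHermitian) (hC : Pairwise (Function.onFun Commute X)) :
    ∃ U ∈ unitaryGroup n 𝕜, ∃ d : ι → n → 𝕜, ∀ i, X i = U * diagonal (d i) * star U := by
  obtain ⟨b, χ, hb⟩ := LinearMap.IsSymmetric.exists_orthonormalBasis_apply_eq_smul_of_commute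
    (T := fun i => toEuclideanLin (X i)) (fun i => isSymmetric_toEuclideanLin_iff.mpr (hX i))
    (fun i j hij => (hC hij).map (toLpLinAlgEquiv 2))
  let e : Fin (Module.finrank 𝕜 (EuclideanSpace 𝕜 n)) ≃ n :=
    Fintype.equivOfCardEq (by simp)
  let b' := b.reindex e
  set U := (EuclideanSpace.basisFun n 𝕜).toBasis.toMatrix b'.toBasis
  have hU : U ∈ unitaryGroup n 𝕜 :=
    (EuclideanSpace.basisFun n 𝕜).toMatrix_orthonormalBasis_mem_unitary b'
  refine ⟨U, hU, fun i k => χ (e.symm k) i, fun i => ?_⟩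
  have hXU : X i * U = U * diagonal fun k => χ (e.symm k) i := by
    ext s k
    have hcol := congrArg (fun v => v s) (hb (e.symm k) i)
    rw [mul_diagonal, mul_apply]
    simpa [U, b', Module.Basis.toMatrix_apply, mulVec, dotProduct, mul_comm] using hcol
  rw [← hXU, mul_assoc, mem_unitaryGroup_iff.mp hU, mul_one]

section StarCommute

variable {A : Type*} [Ring A] [StarRing A] [Algebra ℂ A] [StarModule ℂ A] {a b : A}

theorem Commute.realPart_left (h : Commute a b) (h' : Commute (star a) b) :
    Commute (ℜ a : A) b := by
  rw [realPart_apply_coe]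
  exact (h.add_left h').smul_left _

theorem Commute.imaginaryPart_left (h : Commute a b) (h' : Commute (star a) b) :
    Commute (ℑ a : A) b := by
  rw [imaginaryPart_apply_coe]
  exact ((h.sub_left h').smul_left _).smul_left _

end StarCommute

theorem Matrix.exists_unitary_eq_conj_diagonal_of_commute_star
    {n ι : Type*} [Fintype n] [DecidableEq n] {A : ι → Matrix n n ℂ}
    (hA : ∀ i j, Commute (A i) (A j)) (hA' : ∀ i j, Commute (A i) (A j)ᴴ) :
    ∃ U ∈ unitaryGroup n ℂ, ∃ d : ι → n → ℂ, ∀ i, A i = U * diagonal (d i) * star U := by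
  let X : ι ⊕ ι → Matrix n n ℂ := Sum.elim (fun i => ℜ (A i)) (fun i => ℑ (A i))
  have hX : ∀ x (c : Matrix n n ℂ), Commute (A (x.elim id id)) c →
      Commute (A (x.elim id id))ᴴ c → Commute (X x) c := by
    rintro (i | i) c h h'
    exacts [h.realPart_left h', h.imaginaryPart_left h']
  have hXX : ∀ x y, Commute (X x) (X y) := fun x y =>
    hX x _ (hX y _ (hA _ _) (hA' _ _).symm).symm (hX y _ (hA' _ _) (hA _ _).star_star).symm
  obtain ⟨U, hU, d, hd⟩ := exists_unitary_eq_conj_diagonal_of_isHermitian_of_commute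
    (X := X) (fun x => by rcases x with i | i; exacts [(ℜ (A i)).prop, (ℑ (A i)).prop])
    (fun x y _ => hXX x y)
  refine ⟨U, hU, fun i => d (.inl i) + Complex.I • d (.inr i), fun i => ?_⟩
  rw [← realPart_add_I_smul_imaginaryPart (A i)]
  have hR := hd (.inl i)
  have hI := hd (.inr i)
  simp only [X, Sum.elim_inl, Sum.elim_inr] at hR hI
  rw [hR, hI, ← smul_mul, ← Matrix.mul_smul, ← add_mul, ← mul_add, ← diagonal_smul, diagonal_add]
  rfl

theorem Matrix.PosSemidef.isHermitian_sqrt {n 𝕜 : Type*} [Fintype n] [DecidableEq n] [RCLike 𝕜]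
    {A : Matrix n n 𝕜} (hA : A.PosSemidef) : hA.sqrt.IsHermitian := by
  simp [IsHermitian, sqrt, conjTranspose_mul, mul_assoc, Function.comp_def, star_eq_conjTranspose,
    Pi.star_def]

theorem Matrix.conjTranspose_conj_diagonal_mul_conj_diagonal_sandwich {n 𝕜 : Type*} [Fintype n] [DecidableEq n] [RCLike 𝕜]
    {S U : Matrix n n 𝕜} (hS : S.IsHermitian) (hU : U ∈ unitaryGroup n 𝕜) (a b : n → 𝕜) :
    S * (U * diagonal a * star U)ᴴ * (U * diagonal b * star U) * S
      = S * U * diagonal (fun k => star (a k) * b k) * (S * U)ᴴ := by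
  have hUU : star U * U = 1 := mem_unitaryGroup_iff'.mp hU
  simp only [conjTranspose_mul, diagonal_conjTranspose, star_eq_conjTranspose,
    conjTranspose_conjTranspose, hS.eq, mul_assoc]
  rw [← mul_assoc (Uᴴ) U, ← star_eq_conjTranspose, hUU, one_mul, ← mul_assoc (diagonal _),
    diagonal_mul_diagonal]
  rfl

theorem Matrix.mul_diagonal_mul_conjTranspose_apply {m n 𝕜 : Type*} [Fintype n] [DecidableEq n]
    [RCLike 𝕜] (W : Matrix m n 𝕜) (d : n → 𝕜) (s t : m) :
    (W * diagonal d * Wᴴ) s t = ∑ k, W s k * d k * star (W t k) := by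
  simp only [mul_apply (M := W * diagonal d), mul_diagonal, conjTranspose_apply]

theorem sep3_of_apply_eq_sum_outer {a b c m : ℕ} (ρ : Matrix (Fin a × Fin b × Fin c) (Fin a × Fin b × Fin c) ℂ)
    (f : Fin m → Fin a → ℂ) (g : Fin m → Fin b → ℂ) (h : Fin m → Fin c → ℂ)
    (hρ : ∀ i j s i' j' t, ρ (i, j, s) (i', j', t) =
      ∑ k, f k i * star (f k i') * (g k j * star (g k j')) * (h k s * star (h k t))) :
    Sep3 ρ := by
  refine ⟨m, fun k => vecMulVec (f k) (star (f k)), fun k => vecMulVec (g k) (star (g k)),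
    fun k => vecMulVec (h k) (star (h k)), fun k => posSemidef_vecMulVec_self_star _,
    fun k => posSemidef_vecMulVec_self_star _, fun k => posSemidef_vecMulVec_self_star _, ?_⟩
  ext ⟨i, j, s⟩ ⟨i', j', t⟩
  simp only [hρ, Matrix.sum_apply, kroneckerMap_apply, vecMulVec_apply, Pi.star_apply, mul_assoc]

theorem stmt7 {N : ℕ} (B C D : Matrix (Fin N) (Fin N) ℂ)
    (hB : B * Bᴴ = Bᴴ * B) (hC : C * Cᴴ = Cᴴ * C)
    (hBC : B * C = C * B) (hBC' : B * Cᴴ = Cᴴ * B)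
    (hD : D.PosSemidef) :
    letI M : Fin 2 → Fin 2 → Matrix (Fin N) (Fin N) ℂ := ![![1, B], ![C, C * B]]
    letI ρ : Matrix (Fin 2 × Fin 2 × Fin N) (Fin 2 × Fin 2 × Fin N) ℂ :=
      fun p q => (hD.sqrt * (M p.1 p.2.1)ᴴ * (M q.1 q.2.1) * hD.sqrt) p.2.2 q.2.2
    Sep3 ρ := by
  have hCB' : C * Bᴴ = Bᴴ * C := by simpa using congrArg conjTranspose hBC'
  obtain ⟨U, hU, d, hd⟩ := exists_unitary_eq_conj_diagonal_of_commute_star (A := ![B, C])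
    (by intro i j; fin_cases i <;> fin_cases j; exacts [.refl B, hBC, hBC.symm, .refl C])
    (by intro i j; fin_cases i <;> fin_cases j; exacts [hB, hBC', hCB', hC])
  have hUU : star U * U = 1 := mem_unitaryGroup_iff'.mp hU
  have hBdiag : B = U * diagonal (d 0) * star U := hd 0
  have hCdiag : C = U * diagonal (d 1) * star U := hd 1
  have hM : ∀ i j, ![![1, B], ![C, C * B]] i j =
      U * diagonal (fun k => d 1 k ^ (i : ℕ) * d 0 k ^ (j : ℕ)) * star U := by
    intro i j
    fin_cases i <;> fin_cases j
    · simp [mem_unitaryGroup_iff.mp hU]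
    · simpa using hBdiag
    · simpa using hCdiag
    · simp only [hBdiag, hCdiag, mul_assoc]
      rw [← mul_assoc (star U), hUU, one_mul, ← mul_assoc (diagonal _), diagonal_mul_diagonal]
      simp
  refine sep3_of_apply_eq_sum_outer _ (fun k i => star (d 1 k ^ (i : ℕ))) (fun k j => star (d 0 k ^ (j : ℕ)))
    (fun k s => (hD.sqrt * U) s k) fun i j s i' j' t => ?_
  simp only [hM, conjTranspose_conj_diagonal_mul_conj_diagonal_sandwich hD.isHermitian_sqrt hU,
    mul_diagonal_mul_conjTranspose_apply]
  refine Finset.sum_congr rfl fun k _ => ?_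
  simp only [star_star, star_mul']
  ring
end

section
/- Let D₁,…,D_m and E₁,…,E_n be N×N complex matrices such that all of D₂,…,D_m, E₂,…,E_n are normal and the whole family {Dᵢ, Eⱼ} pairwise commutes and also commutes with the adjoints of each other (i.e. they are simultaneously unitarily diagonalizable), with D₁ = E₁ = 𝟙. Let T be the N × (mnN) matrix T = (D₁,…,D_m) ⊗ (E₁,…,E_n) (row block structure: the (i,j) block of T is DᵢEⱼ viewed appropriately, i.e. T has (i,j)-th N×N block equal to Dᵢ Eⱼ as a row of blocks). Then ρ = T*T is fully separable as a state on ℂ^m ⊗ ℂ^n ⊗ ℂ^N. -/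
open Matrix Kronecker ComplexOrder

/-!
The matrices `Dᵢ`, `Eⱼ` commute with each other and with each other's adjoints, so their real
and imaginary parts form a commuting family of Hermitian matrices, which one unitary `U`
diagonalizes: `Dᵢ = U diag(dᵢ) U*`, `Eⱼ = U diag(eⱼ) U*`. Then `Y = U* T` has entries
`Y p (i, j, l) = dᵢ(p) eⱼ(p) conj (U l p)`, so every row of `Y` is a product vector, and
`T* T = Y* Y = ∑ₚ (row p)* (row p)` is a sum of tensor products of rank-one projections.
-/

open Function ComplexStarModule

namespace LinearMap.IsSymmetric

open Module.End

theorem exists_orthonormalBasis_apply_eq_smul_of_commute_s9 {𝕜 E ι κ : Type*} [RCLike 𝕜]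
    [NormedAddCommGroup E] [InnerProductSpace 𝕜 E] [FiniteDimensional 𝕜 E] [Fintype κ]
    (hκ : Module.finrank 𝕜 E = Fintype.card κ) {T : ι → E →ₗ[𝕜] E}
    (hT : ∀ i, (T i).IsSymmetric) (hc : Pairwise (Commute on T)) :
    ∃ (b : OrthonormalBasis κ 𝕜 E) (d : ι → κ → 𝕜),
      ∀ i p, T i (b p) = d i p • b p := by
  classical
  set V := fun χ : ι → 𝕜 => ⨅ i, eigenspace (T i) (χ i)
  have hint : DirectSum.IsInternal V := directSum_isInternal_of_pairwise_commute hT hc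
  let v := hint.collectedBasis fun χ => (stdOrthonormalBasis 𝕜 (V χ)).toBasis
  have hv : Orthonormal 𝕜 v := hint.collectedBasis_orthonormal
    (orthogonalFamily_iInf_eigenspaces hT) fun χ => by
      simp only [OrthonormalBasis.coe_toBasis, OrthonormalBasis.orthonormal]
  have := FiniteDimensional.fintypeBasisIndex v
  let e := Fintype.equivOfCardEq ((Module.finrank_eq_card_basis v).symm.trans hκ)
  refine ⟨(v.toOrthonormalBasis hv).reindex e, fun i p => (e.symm p).1 i, fun i p => ?_⟩
  rw [OrthonormalBasis.reindex_apply, Module.Basis.coe_toOrthonormalBasis]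
  exact mem_eigenspace_iff.mp <| (Submodule.mem_iInf _).mp (hint.collectedBasis_mem _ _) i

end LinearMap.IsSymmetric

namespace Matrix

theorem exists_unitary_diagonal_of_isHermitian_of_commute {𝕜 n ι : Type*} [RCLike 𝕜]
    [Fintype n] [DecidableEq n] {F : ι → Matrix n n 𝕜} (hF : ∀ i, (F i).IsHermitian)
    (hc : Pairwise (Commute on F)) :
    ∃ U ∈ unitaryGroup n 𝕜, ∃ d : ι → n → 𝕜, ∀ i, F i = U * diagonal (d i) * star U := by
  have hT : ∀ i, (toEuclideanLin (F i)).IsSymmetric := fun i =>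
    isSymmetric_toEuclideanLin_iff.mpr (hF i)
  have hcT : Pairwise (Commute on fun i => toEuclideanLin (F i)) := fun i j hij => by
    simp only [onFun, Commute, SemiconjBy, Module.End.mul_eq_comp, ← toLpLin_mul_same, (hc hij).eq]
  obtain ⟨b, d, hb⟩ := LinearMap.IsSymmetric.exists_orthonormalBasis_apply_eq_smul_of_commute_s9
    finrank_euclideanSpace hT hcT
  set U := (EuclideanSpace.basisFun n 𝕜).toBasis.toMatrix b.toBasis
  have hU : U ∈ unitaryGroup n 𝕜 :=
    (EuclideanSpace.basisFun n 𝕜).toMatrix_orthonormalBasis_mem_unitary b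
  refine ⟨U, hU, d, fun i => ?_⟩
  have hFU : F i * U = U * diagonal (d i) := by
    ext k p
    have hUkp : ∀ l, U l p = b p l := fun _ => rfl
    rw [mul_diagonal, hUkp, mul_comm, mul_apply]
    simpa [hUkp, mulVec, dotProduct] using congr($(hb i p) k)
  rw [← hFU, mul_assoc, (mem_unitaryGroup_iff).mp hU, mul_one]

end Matrix

section StarModule

variable {A : Type*} [Ring A] [StarRing A] [Algebra ℂ A] [StarModule ℂ A] {a b : A}

theorem Commute.realPart_right (h : Commute a b) (h' : Commute a (star b)) :
    Commute a (ℜ b : A) := by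
  rw [realPart_apply_coe]
  exact (h.add_right h').smul_right _

theorem Commute.imaginaryPart_right (h : Commute a b) (h' : Commute a (star b)) :
    Commute a (ℑ b : A) := by
  rw [imaginaryPart_apply_coe]
  exact ((h.sub_right h').smul_right _).smul_right _

end StarModule

namespace Matrix

open Complex in
theorem exists_unitary_diagonal_of_commute {n ι : Type*} [Fintype n] [DecidableEq n]
    {F : ι → Matrix n n ℂ} (hc : ∀ i j, Commute (F i) (F j))
    (hca : ∀ i j, Commute (F i) (F j)ᴴ) :
    ∃ U ∈ unitaryGroup n ℂ, ∃ d : ι → n → ℂ, ∀ i, F i = U * diagonal (d i) * star U := by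
  set H : ι × Bool → Matrix n n ℂ := fun a => cond a.2 (ℑ (F a.1)) (ℜ (F a.1))
  have hH : ∀ a, (H a).IsHermitian := by
    rintro ⟨i, _ | _⟩
    exacts [isHermitian_iff_isSelfAdjoint.mpr (ℜ (F i)).2,
      isHermitian_iff_isSelfAdjoint.mpr (ℑ (F i)).2]
  have commute_H : ∀ x i, Commute x (F i) → Commute x (star (F i)) → ∀ s, Commute x (H (i, s)) := by
    rintro x i h h' (_ | _)
    exacts [h.realPart_right h', h.imaginaryPart_right h']
  have hcH : Pairwise (Commute on H) := by
    rintro ⟨i, s⟩ ⟨j, t⟩ -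
    refine commute_H _ j ?_ ?_ t
    · exact (commute_H _ i (hc j i) (hca j i) s).symm
    · exact (commute_H _ i (hca i j).symm (hc j i).star_star s).symm
  obtain ⟨U, hU, d, hd⟩ := exists_unitary_diagonal_of_isHermitian_of_commute hH hcH
  refine ⟨U, hU, fun i => d (i, false) + I • d (i, true), fun i => ?_⟩
  beta_reduce
  rw [← realPart_add_I_smul_imaginaryPart (F i)]
  change H (i, false) + I • H (i, true) = _
  rw [hd, hd, ← smul_mul_assoc, ← mul_smul_comm, ← diagonal_smul, ← add_mul, ← mul_add,
    diagonal_add]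
  rfl

end Matrix

theorem sep3_conjTranspose_mul_self_of_apply_eq_mul {a b c k : ℕ}
    {Y : Matrix (Fin k) (Fin a × Fin b × Fin c) ℂ} (x : Fin k → Fin a → ℂ)
    (y : Fin k → Fin b → ℂ) (z : Fin k → Fin c → ℂ)
    (hY : ∀ p q, Y p q = x p q.1 * (y p q.2.1 * z p q.2.2)) :
    Sep3 (Yᴴ * Y) := by
  refine ⟨k, fun p => vecMulVec (star (x p)) (x p), fun p => vecMulVec (star (y p)) (y p),
    fun p => vecMulVec (star (z p)) (z p), fun p => posSemidef_vecMulVec_star_self _,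
    fun p => posSemidef_vecMulVec_star_self _, fun p => posSemidef_vecMulVec_star_self _, ?_⟩
  ext q q'
  simp only [mul_apply, conjTranspose_apply, hY, Matrix.sum_apply, kroneckerMap_apply,
    vecMulVec_apply, Pi.star_apply, star_mul']
  exact Finset.sum_congr rfl fun p _ => by ring

theorem stmt9_general {m n N : ℕ} (D : Fin (m + 1) → Matrix (Fin N) (Fin N) ℂ)
    (E : Fin (n + 1) → Matrix (Fin N) (Fin N) ℂ)
    (hcomm : ∀ F ∈ Set.range D ∪ Set.range E, ∀ G ∈ Set.range D ∪ Set.range E,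
      F * G = G * F ∧ F * Gᴴ = Gᴴ * F) :
    letI T : Matrix (Fin N) (Fin (m + 1) × Fin (n + 1) × Fin N) ℂ :=
      fun k q => (D q.1 * E q.2.1) k q.2.2
    Sep3 (Tᴴ * T) := by
  set T : Matrix (Fin N) (Fin (m + 1) × Fin (n + 1) × Fin N) ℂ :=
    fun k q => (D q.1 * E q.2.1) k q.2.2
  have hmem : ∀ a, Sum.elim D E a ∈ Set.range D ∪ Set.range E := by
    rintro (i | j)
    exacts [.inl ⟨i, rfl⟩, .inr ⟨j, rfl⟩]
  obtain ⟨U, hU, d, hd⟩ := exists_unitary_diagonal_of_commute (F := Sum.elim D E)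
    (fun a b => (hcomm _ (hmem a) _ (hmem b)).1) (fun a b => (hcomm _ (hmem a) _ (hmem b)).2)
  have hUd : ∀ a, star U * Sum.elim D E a = diagonal (d a) * star U := fun a => by
    rw [hd, ← mul_assoc, ← mul_assoc, (mem_unitaryGroup_iff').mp hU, one_mul]
  have hUD : ∀ i, star U * D i = diagonal (d (.inl i)) * star U := fun i => hUd (.inl i)
  have hUE : ∀ j, star U * E j = diagonal (d (.inr j)) * star U := fun j => hUd (.inr j)
  have hY : ∀ p q, (star U * T) p q =
      d (.inl q.1) p * (d (.inr q.2.1) p * star (U q.2.2 p)) := fun p q => by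
    change (star U * (D q.1 * E q.2.1) : Matrix (Fin N) (Fin N) ℂ) p q.2.2 = _
    rw [← mul_assoc, hUD, mul_assoc, hUE, ← mul_assoc,
      diagonal_mul_diagonal, diagonal_mul]
    simp only [star_apply, RCLike.star_def, mul_assoc]
  have hρ : Tᴴ * T = (star U * T)ᴴ * (star U * T) := by
    rw [conjTranspose_mul, ← star_eq_conjTranspose (star U), star_star, Matrix.mul_assoc,
      ← Matrix.mul_assoc U, (mem_unitaryGroup_iff).mp hU, Matrix.one_mul]
  rw [hρ]
  exact sep3_conjTranspose_mul_self_of_apply_eq_mul (fun p i => d (.inl i) p)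
    (fun p j => d (.inr j) p) (fun p l => star (U l p)) hY

theorem stmt9 {m n N : ℕ} (D : Fin (m + 1) → Matrix (Fin N) (Fin N) ℂ)
    (E : Fin (n + 1) → Matrix (Fin N) (Fin N) ℂ)
    (hD0 : D 0 = 1) (hE0 : E 0 = 1)
    (hnormal : ∀ F ∈ Set.range D ∪ Set.range E, F * Fᴴ = Fᴴ * F)
    (hcomm : ∀ F ∈ Set.range D ∪ Set.range E, ∀ G ∈ Set.range D ∪ Set.range E,
      F * G = G * F ∧ F * Gᴴ = Gᴴ * F) :
    letI T : Matrix (Fin N) (Fin (m + 1) × Fin (n + 1) × Fin N) ℂ :=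
      fun k q => (D q.1 * E q.2.1) k q.2.2
    Sep3 (Tᴴ * T) :=
  stmt9_general D E hcomm
end

section
/- Let X₁, X₂, S be d×d matrices with ρ = X*X, X = [[X₁, SX₁],[0, X₂]], satisfying the SPPT condition X₁*(SS* − S*S)X₁ = 0. Let X₁ = UΛV* be a singular value decomposition with Λ = diag(Σ, 0) and write U*SU = [[S₁,S₂],[S₃,S₄]] conformally. If the column space of S is contained in the column space of X₁, then S₃ = 0, S₄ = 0, S₂ = 0 and S₁ is normal; consequently S is normal. -/
/-!
Put `T = Uᴴ S U`. Since `X₁ = U diag(σ) Vᴴ`, the inclusion `Im S ⊆ Im X₁` gives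
`T = diag(σ) M`, so the rows of `T` outside the support `{i | i < r}` of `σ` vanish, while the SPPT
condition conjugated by `V` says that the self-commutator `T Tᴴ - Tᴴ T` vanishes on the `r × r`
block. Summing the diagonal of `T Tᴴ = Tᴴ T` over the block counts, on one side, the squared
moduli of all entries of `T` and, on the other, only those in the first `r` columns; hence the
remaining columns vanish as well, `T` is block diagonal, and normality of `T` (hence of `S`) follows
from the block condition.
-/

open Matrix

namespace Matrix

variable {m n k R 𝕜 : Type*}

theorem exists_eq_mul_of_range_toLin'_le [CommSemiring R] [Fintype n] [Fintype k] [DecidableEq n]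
    [DecidableEq k] {S : Matrix m k R} {X : Matrix m n R}
    (h : LinearMap.range (toLin' S) ≤ LinearMap.range (toLin' X)) :
    ∃ Y : Matrix n k R, S = X * Y := by
  choose y hy using fun j => h ⟨Pi.single j 1, rfl⟩
  refine ⟨(of y)ᵀ, ?_⟩
  ext i j
  have := congrFun (hy j) i
  simp only [toLin'_apply, mulVec_single_one, col_apply] at this
  exact this.symm

section Unitary

variable [Fintype n] [DecidableEq n] [CommRing R] [StarRing R] {U V X S : Matrix n n R}

theorem exists_conj_eq_diagonal_mul {σ : n → R} (hU : Uᴴ * U = 1) (hX : X = U * diagonal σ * Vᴴ)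
    (h : LinearMap.range (toLin' S) ≤ LinearMap.range (toLin' X)) :
    ∃ M, Uᴴ * S * U = diagonal σ * M := by
  obtain ⟨Y, rfl⟩ := exists_eq_mul_of_range_toLin'_le h
  exact ⟨Vᴴ * Y * U, by simp only [hX, ← Matrix.mul_assoc, hU, Matrix.one_mul]⟩

theorem diagonal_mul_conj_mul_diagonal_eq_zero {σ : n → R} {C : Matrix n n R} (hV : Vᴴ * V = 1)
    (hX : X = U * diagonal σ * Vᴴ) (h : Xᴴ * C * X = 0) :
    diagonal (star σ) * (Uᴴ * C * U) * diagonal σ = 0 := by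
  have := congrArg (fun M => Vᴴ * M * V) h
  simpa [hX, diagonal_conjTranspose, Matrix.mul_assoc, ← Matrix.mul_assoc Vᴴ V, hV] using this

theorem commutator_conjTranspose_conj (hU : U * Uᴴ = 1) :
    (Uᴴ * S * U) * (Uᴴ * S * U)ᴴ - (Uᴴ * S * U)ᴴ * (Uᴴ * S * U) = Uᴴ * (S * Sᴴ - Sᴴ * S) * U := by
  simp only [conjTranspose_mul, conjTranspose_conjTranspose, Matrix.mul_sub, Matrix.sub_mul,
    Matrix.mul_assoc, ← Matrix.mul_assoc U Uᴴ, hU, Matrix.one_mul]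

theorem mul_conjTranspose_self_comm_of_conj (hU : U * Uᴴ = 1)
    (h : (Uᴴ * S * U) * (Uᴴ * S * U)ᴴ = (Uᴴ * S * U)ᴴ * (Uᴴ * S * U)) : S * Sᴴ = Sᴴ * S := by
  rw [← sub_eq_zero, commutator_conjTranspose_conj hU] at h
  have := congrArg (fun M => U * M * Uᴴ) h
  simpa [Matrix.mul_assoc, ← Matrix.mul_assoc U Uᴴ, hU, sub_eq_zero] using this

end Unitary

section RCLike

variable [Fintype n] [RCLike 𝕜]

theorem mul_conjTranspose_self_apply_self (T : Matrix m n 𝕜) (i : m) :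
    (T * Tᴴ) i i = ((∑ j, ‖T i j‖ ^ 2 : ℝ) : 𝕜) := by
  simp [mul_apply, RCLike.mul_conj]

theorem conjTranspose_mul_self_apply_self (T : Matrix n m 𝕜) (j : m) :
    (Tᴴ * T) j j = ((∑ i, ‖T i j‖ ^ 2 : ℝ) : 𝕜) := by
  simp [mul_apply, RCLike.conj_mul]

theorem col_eq_zero_of_row_eq_zero_of_diag_commutator (T : Matrix n n 𝕜) (p : n → Prop)
    (hrow : ∀ i j, ¬ p i → T i j = 0) (hdiag : ∀ i, p i → (T * Tᴴ) i i = (Tᴴ * T) i i) :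
    ∀ i j, ¬ p j → T i j = 0 := by
  classical
  set f : n → n → ℝ := fun i j => ‖T i j‖ ^ 2
  have hrows : ∑ i with p i, ∑ j, f i j = ∑ i, ∑ j, f i j :=
    Finset.sum_filter_of_ne fun i _ hi => by
      by_contra hpi
      exact hi (Finset.sum_eq_zero fun j _ => by simp [f, hrow i j hpi])
  have hcols : ∑ i with p i, ∑ j, f i j = ∑ j with p j, ∑ i, f i j :=
    Finset.sum_congr rfl fun i hi => by
      have := hdiag i (Finset.mem_filter.1 hi).2
      rw [mul_conjTranspose_self_apply_self, conjTranspose_mul_self_apply_self] at this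
      exact_mod_cast this
  have hrest : ∑ j with ¬ p j, ∑ i, f i j = 0 := by
    have hsplit := Finset.sum_filter_add_sum_filter_not Finset.univ p (fun j => ∑ i, f i j)
    have hswap : ∑ i, ∑ j, f i j = ∑ j, ∑ i, f i j := Finset.sum_comm
    linarith
  intro i j hj
  have hcol := (Finset.sum_eq_zero_iff_of_nonneg fun _ _ => by positivity).1 hrest j
    (by simpa using hj)
  have := (Finset.sum_eq_zero_iff_of_nonneg fun _ _ => by positivity).1 hcol i
    (Finset.mem_univ _)
  simpa [f] using this

theorem mul_conjTranspose_self_comm_of_block (T : Matrix n n 𝕜) (p : n → Prop)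
    (hrow : ∀ i j, ¬ p i → T i j = 0) (hcol : ∀ i j, ¬ p j → T i j = 0)
    (hblock : ∀ i j, p i → p j → (T * Tᴴ) i j = (Tᴴ * T) i j) : T * Tᴴ = Tᴴ * T := by
  ext i j
  by_cases hi : p i
  · by_cases hj : p j
    · exact hblock i j hi hj
    · simp [mul_apply, hrow j _ hj, hcol _ j hj]
  · simp [mul_apply, hrow i _ hi, hcol _ i hi]

end RCLike

end Matrix

theorem stmt15_general {d : ℕ} (X₁ S U V Λ : Matrix (Fin d) (Fin d) ℂ) (r : ℕ)
    (hSPPT : X₁ᴴ * (S * Sᴴ - Sᴴ * S) * X₁ = 0)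
    (hU : Uᴴ * U = 1) (hU' : U * Uᴴ = 1)
    (hV : Vᴴ * V = 1)
    (hΛ : Λ.IsDiag)
    (hΛr : ∀ i : Fin d, Λ i i ≠ 0 ↔ (i : ℕ) < r)
    (hSVD : X₁ = U * Λ * Vᴴ)
    (hrange : LinearMap.range (Matrix.toLin' S) ≤ LinearMap.range (Matrix.toLin' X₁)) :
    (∀ i j : Fin d, r ≤ (i : ℕ) → (Uᴴ * S * U) i j = 0) ∧
    (∀ i j : Fin d, r ≤ (j : ℕ) → (Uᴴ * S * U) i j = 0) ∧
    S * Sᴴ = Sᴴ * S := by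
  rw [← hΛ.diagonal_diag] at hSVD
  set T := Uᴴ * S * U
  have hrow : ∀ i j : Fin d, ¬ (i : ℕ) < r → T i j = 0 := by
    obtain ⟨M, hM⟩ := exists_conj_eq_diagonal_mul hU hSVD hrange
    intro i j hi
    simp [T, hM, not_not.1 (mt (hΛr i).1 hi)]
  have hblock : ∀ i j : Fin d, (i : ℕ) < r → (j : ℕ) < r → (T * Tᴴ) i j = (Tᴴ * T) i j := by
    intro i j hi hj
    have h := congrFun₂ (diagonal_mul_conj_mul_diagonal_eq_zero hV hSVD hSPPT) i j
    rw [← commutator_conjTranspose_conj hU', mul_diagonal, diagonal_mul, Matrix.zero_apply] at h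
    simpa only [Pi.star_apply, diag_apply, mul_eq_zero, star_eq_zero, (hΛr i).2 hi, (hΛr j).2 hj,
      or_false, false_or, Matrix.sub_apply, sub_eq_zero] using h
  have hcol := col_eq_zero_of_row_eq_zero_of_diag_commutator T _ hrow fun i hi => hblock i i hi hi
  exact ⟨fun i j hi => hrow i j (not_lt.2 hi), fun i j hj => hcol i j (not_lt.2 hj),
    mul_conjTranspose_self_comm_of_conj hU'
      (mul_conjTranspose_self_comm_of_block T _ hrow hcol hblock)⟩

theorem stmt15 {d : ℕ} (X₁ X₂ S U V Λ : Matrix (Fin d) (Fin d) ℂ) (r : ℕ)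
    (hSPPT : X₁ᴴ * (S * Sᴴ - Sᴴ * S) * X₁ = 0)
    (hU : Uᴴ * U = 1) (hU' : U * Uᴴ = 1)
    (hV : Vᴴ * V = 1) (hV' : V * Vᴴ = 1)
    (hΛ : Λ.IsDiag)
    (hΛr : ∀ i : Fin d, Λ i i ≠ 0 ↔ (i : ℕ) < r)
    (hSVD : X₁ = U * Λ * Vᴴ)
    (hrange : LinearMap.range (Matrix.toLin' S) ≤ LinearMap.range (Matrix.toLin' X₁)) :
    (∀ i j : Fin d, r ≤ (i : ℕ) → (Uᴴ * S * U) i j = 0) ∧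
    (∀ i j : Fin d, r ≤ (j : ℕ) → (Uᴴ * S * U) i j = 0) ∧
    S * Sᴴ = Sᴴ * S :=
  stmt15_general X₁ S U V Λ r hSPPT hU hU' hV hΛ hΛr hSVD hrange
end

section
/- Let Y₂₁ be a 2×2 complex matrix of rank 1 and T₂ a 2×2 complex matrix. Then the row space of the 2×4 matrix (Y₂₁ | T₂Y₂₁), viewed inside ℂ²⊗ℂ², contains a nonzero product vector. -/
open Matrix

theorem stmt18 (Y T₂ : Matrix (Fin 2) (Fin 2) ℂ) (hY : Y.rank = 1) :
    letI M : Matrix (Fin 2) (Fin 2 × Fin 2) ℂ :=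
      fun r q => (![Y, T₂ * Y] q.1) r q.2
    ∃ (u w : Fin 2 → ℂ), u ≠ 0 ∧ w ≠ 0 ∧
      (fun p : Fin 2 × Fin 2 => u p.1 * w p.2) ∈
        Submodule.span ℂ (Set.range fun r => M r) := by
  set M : Matrix (Fin 2) (Fin 2 × Fin 2) ℂ :=
    fun r q => (![Y, T₂ * Y] q.1) r q.2 with hM
  -- Y ≠ 0
  have hY0 : Y ≠ 0 := by
    rintro rfl
    rw [Matrix.rank_zero] at hY
    exact one_ne_zero hY.symm
  -- det Y = 0
  have hdet : Y.det = 0 := by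
    by_contra h
    have hu : IsUnit Y := (Matrix.isUnit_iff_isUnit_det Y).2 (isUnit_iff_ne_zero.2 h)
    have := Matrix.rank_of_isUnit Y hu
    rw [hY] at this
    simp [Fintype.card_fin] at this
  have hdet' : Y 0 0 * Y 1 1 - Y 0 1 * Y 1 0 = 0 := by
    rw [Matrix.det_fin_two] at hdet; exact hdet
  -- decomposition Y r c = α r * w c with α r₀ ≠ 0, w ≠ 0
  obtain ⟨α, w, r₀, hα, hw, hdec⟩ :
      ∃ (α w : Fin 2 → ℂ) (r₀ : Fin 2), α r₀ ≠ 0 ∧ w ≠ 0 ∧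
        ∀ r c, Y r c = α r * w c := by
    by_cases ha : Y 0 0 ≠ 0
    · refine ⟨![Y 0 0, Y 1 0], ![1, Y 0 1 / Y 0 0], 0, by simpa using ha,
        fun h => one_ne_zero (congrFun h 0), ?_⟩
      intro r c
      fin_cases r <;> fin_cases c <;> simp <;> field_simp <;> linear_combination hdet'
    · push_neg at ha
      by_cases hb : Y 0 1 ≠ 0
      · have hc : Y 1 0 = 0 := by
          have : Y 0 1 * Y 1 0 = 0 := by linear_combination -hdet' + Y 1 1 * ha
          exact (mul_eq_zero.1 this).resolve_left hb
        refine ⟨![Y 0 1, Y 1 1], ![0, 1], 0, by simpa using hb,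
          fun h => one_ne_zero (congrFun h 1), ?_⟩
        intro r c
        fin_cases r <;> fin_cases c <;> simp [ha, hc]
      · push_neg at hb
        have hrow : Y 1 0 ≠ 0 ∨ Y 1 1 ≠ 0 := by
          by_contra h
          push_neg at h
          apply hY0
          ext r c
          fin_cases r <;> fin_cases c <;> simp [ha, hb, h.1, h.2]
        refine ⟨![0, 1], ![Y 1 0, Y 1 1], 1, by simp, ?_, ?_⟩
        · intro h
          rcases hrow with h1 | h1 <;> [exact h1 (congrFun h 0); exact h1 (congrFun h 1)]
        · intro r c
          fin_cases r <;> fin_cases c <;> simp [ha, hb]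
  -- the product vector is row r₀ of M
  refine ⟨![α r₀, ∑ k, T₂ r₀ k * α k], w, ?_, hw, ?_⟩
  · intro h
    exact hα (by simpa using congrFun h 0)
  · have hrow : (fun p : Fin 2 × Fin 2 =>
        (![α r₀, ∑ k, T₂ r₀ k * α k] : Fin 2 → ℂ) p.1 * w p.2) = M r₀ := by
      funext p
      obtain ⟨i, c⟩ := p
      fin_cases i
      · simp [M, hdec]
      · simp [M, Matrix.mul_apply, hdec, Fin.sum_univ_two]
        ring
    rw [hrow]
    exact Submodule.subset_span ⟨r₀, rfl⟩
end
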